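/- Let μ_0 be a probability measure on (0,∞) with Laplace transform φ_0, and for j ∈ {1, …, J} let ψ_j : [0,∞) → [0,∞) be continuous strictly increasing with ψ_j(0) = 0 and ψ_j(y) → ∞ as y → ∞, and let κ_j be measurable families of probability measures on (0,∞) with ∫₀^∞ e^{−ys} dκ_j(t)(s) = e^{−tψ_j(y)} for all t, y ≥ 0. Suppose each φ_j := φ_0 ∘ ψ_j is a continuous strictly decreasing bijection from [0,∞) onto (0,1] with inverse φ_j^{−1}. Let (Λ_1, …, Λ_J) be a random vector with law μ_0.bind(t ↦ ⊗_j κ_j(t)), and let (E_{j,i}), j ∈ {1,…,J}, i ∈ {1,…,d_j}, be i.i.d. Exp(1) random variables independent of (Λ_1, …, Λ_J). Then for all u_{j,i} ∈ (0,1], P(φ_j(E_{j,i}/Λ_j) ≤ u_{j,i} for all j, i) = φ_0(∑_{j=1}^J ψ_j(∑_{i=1}^{d_j} φ_j^{−1}(u_{j,i}))). (Correctness of the hierarchical Archimedean copula sampling algorithm: the output follows the two-level hierarchical Archimedean copula with outer generator φ_0 and inner generators φ_j = φ_0 ∘ ψ_j.) -/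

import Mathlib

/-!
Since `φⱼ = φ₀ ∘ ψⱼ` is strictly decreasing with inverse `φⱼ⁻¹`, the event
`φⱼ(E_{j,i}/Λⱼ) ≤ u_{j,i}` is `c_{j,i} Λⱼ ≤ E_{j,i}` with `c_{j,i} = φⱼ⁻¹(u_{j,i})`. Given `Λ`,
independent `Exp(1)` variables exceed these thresholds with probability `exp(-∑ⱼ sⱼ Λⱼ)`,
`sⱼ = ∑ᵢ c_{j,i}`. Given the common time `t`, the `Λⱼ` are independent with Laplace transforms
`exp(-t ψⱼ)`, so averaging yields `∫ exp(-t ∑ⱼ ψⱼ(sⱼ)) dμ₀(t) = φ₀(∑ⱼ ψⱼ(sⱼ))`.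
-/

open MeasureTheory Set ProbabilityTheory Real
open scoped ENNReal

lemma ENNReal.ofReal_exp_neg_sum {ι : Type*} (s : Finset ι) (f : ι → ℝ) :
    ENNReal.ofReal (exp (-∑ i ∈ s, f i)) = ∏ i ∈ s, ENNReal.ofReal (exp (-f i)) := by
  rw [← Finset.sum_neg_distrib, exp_sum, ENNReal.ofReal_prod_of_nonneg fun i _ => (exp_pos _).le]

lemma ae_pos_of_measure_setOf_le_zero {μ : Measure ℝ} (h : μ {t | t ≤ 0} = 0) :
    ∀ᵐ t ∂μ, 0 < t := by
  simpa [ae_iff] using h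

section Laplace

variable {μ : Measure ℝ} {x : ℝ}

lemma integrable_exp_neg_mul [IsFiniteMeasure μ] (hμ : ∀ᵐ t ∂μ, 0 ≤ t) (hx : 0 ≤ x) :
    Integrable (fun t => exp (-(x * t))) μ := by
  refine (integrable_const 1).mono' (by fun_prop) ?_
  filter_upwards [hμ] with t ht
  rw [norm_of_nonneg (exp_pos _).le, exp_le_one_iff, neg_nonpos]
  exact mul_nonneg hx ht

lemma ofReal_integral_exp_neg_mul [IsFiniteMeasure μ] (hμ : ∀ᵐ t ∂μ, 0 ≤ t) (hx : 0 ≤ x) :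
    ENNReal.ofReal (∫ t, exp (-(x * t)) ∂μ) = ∫⁻ t, ENNReal.ofReal (exp (-(x * t))) ∂μ :=
  ofReal_integral_eq_lintegral_ofReal (integrable_exp_neg_mul hμ hx)
    (.of_forall fun _ => (exp_pos _).le)

lemma antitoneOn_integral_exp_neg_mul [IsFiniteMeasure μ] (hμ : ∀ᵐ t ∂μ, 0 ≤ t) :
    AntitoneOn (fun x => ∫ t, exp (-(x * t)) ∂μ) (Ici 0) := by
  intro x hx y hy hxy
  refine integral_mono_ae (integrable_exp_neg_mul hμ hy) (integrable_exp_neg_mul hμ hx) ?_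
  filter_upwards [hμ] with t ht
  exact exp_le_exp.mpr (neg_le_neg (mul_le_mul_of_nonneg_right hxy ht))

end Laplace

section Exponential

variable {Ω : Type*} [MeasurableSpace Ω] {P : Measure Ω} [IsProbabilityMeasure P]

lemma measure_le_eq_ofReal_exp_neg {X : Ω → ℝ}
    (hX : ∀ t ≥ (0 : ℝ), P {ω | t < X ω} = ENNReal.ofReal (exp (-t))) {b : ℝ} (hb : 0 ≤ b) :
    P {ω | b ≤ X ω} = ENNReal.ofReal (exp (-b)) := by
  refine le_antisymm ?_ ((hX b hb).symm.trans_le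
    (measure_mono fun ω (h : b < X ω) => show b ≤ X ω from h.le))
  rcases hb.eq_or_lt with rfl | hb
  · simpa using prob_le_one
  have hlim : Filter.Tendsto (fun t => ENNReal.ofReal (exp (-t))) (nhdsWithin b (Iio b))
      (nhds (ENNReal.ofReal (exp (-b)))) := by
    refine (Continuous.tendsto ?_ b).mono_left nhdsWithin_le_nhds
    exact ENNReal.continuous_ofReal.comp (by fun_prop)
  refine ge_of_tendsto hlim ?_
  filter_upwards [Ioo_mem_nhdsLT hb] with t ht
  exact (measure_mono fun ω hω => ht.2.trans_le hω).trans_eq (hX t ht.1.le)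

lemma ae_pos_of_measure_lt_eq_ofReal_exp_neg {X : Ω → ℝ} (hXm : Measurable X)
    (hX : ∀ t ≥ (0 : ℝ), P {ω | t < X ω} = ENNReal.ofReal (exp (-t))) : ∀ᵐ ω ∂P, 0 < X ω :=
  (ae_iff_measure_eq (measurableSet_lt measurable_const hXm).nullMeasurableSet).2
    (by rw [hX 0 le_rfl]; simp)

lemma ProbabilityTheory.iIndepFun.measure_forall_le_eq_ofReal_exp_neg_sum {ι : Type*} [Fintype ι]
    {E : ι → Ω → ℝ} (hindep : iIndepFun E P)
    (hE : ∀ i, ∀ t ≥ (0 : ℝ), P {ω | t < E i ω} = ENNReal.ofReal (exp (-t)))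
    {b : ι → ℝ} (hb : ∀ i, 0 ≤ b i) :
    P {ω | ∀ i, b i ≤ E i ω} = ENNReal.ofReal (exp (-∑ i, b i)) := by
  have hset : {ω | ∀ i, b i ≤ E i ω} = ⋂ i ∈ Finset.univ, E i ⁻¹' Ici (b i) := by
    ext ω; simp
  rw [hset, hindep.measure_inter_preimage_eq_mul _ fun i _ => measurableSet_Ici,
    ENNReal.ofReal_exp_neg_sum]
  exact Finset.prod_congr rfl fun i _ => measure_le_eq_ofReal_exp_neg (hE i) (hb i)

end Exponential

section ProductMeasure

variable {ι : Type*} [Fintype ι] {α : ι → Type*} [∀ i, MeasurableSpace (α i)]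

lemma lintegral_pi_prod_eq_prod {ν : (i : ι) → Measure (α i)} [∀ i, IsProbabilityMeasure (ν i)]
    {f : (i : ι) → α i → ℝ≥0∞} (hf : ∀ i, Measurable (f i)) :
    ∫⁻ x, ∏ i, f i (x i) ∂Measure.pi ν = ∏ i, ∫⁻ a, f i a ∂ν i := by
  rw [lintegral_prod_eq_prod_lintegral_of_indepFun _ _
    (iIndepFun_pi fun i => (hf i).aemeasurable) fun i => (hf i).comp (measurable_pi_apply i)]
  exact Finset.prod_congr rfl fun i _ => (measurePreserving_eval ν i).lintegral_comp (hf i)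

lemma measurable_measure_pi {β : Type*} [MeasurableSpace β] {κ : (i : ι) → β → Measure (α i)}
    [∀ i b, IsProbabilityMeasure (κ i b)] (hκ : ∀ i, Measurable (κ i)) :
    Measurable fun b => Measure.pi fun i => κ i b := by
  refine .measure_of_isPiSystem_of_isProbabilityMeasure generateFrom_pi.symm isPiSystem_pi ?_
  rintro _ ⟨s, hs, rfl⟩
  simp_rw [Measure.pi_pi]
  exact Finset.measurable_prod _ fun i _ =>
    (Measure.measurable_coe (hs i (mem_univ i))).comp (hκ i)

lemma aemeasurable_measure_pi_of_ae_nonneg {μ : Measure ℝ} (hμ : ∀ᵐ t ∂μ, 0 ≤ t)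
    {κ : (i : ι) → ℝ → Measure (α i)} (hκ : ∀ i, Measurable (κ i))
    (hκprob : ∀ i, ∀ t ≥ (0 : ℝ), IsProbabilityMeasure (κ i t)) :
    AEMeasurable (fun t => Measure.pi fun i => κ i t) μ := by
  have : ∀ i t, IsProbabilityMeasure (κ i (max t 0)) := fun i t => hκprob i _ (le_max_right t 0)
  refine ⟨_, measurable_measure_pi (κ := fun i t => κ i (max t 0))
    fun i => (hκ i).comp (measurable_id.max measurable_const), ?_⟩
  filter_upwards [hμ] with t ht
  simp only [max_eq_left ht]

end ProductMeasure

lemma MeasureTheory.Measure.ae_bind_of_ae_ae {α β : Type*} [MeasurableSpace α] [MeasurableSpace β]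
    {m : Measure α} {f : α → Measure β} (hf : AEMeasurable f m) {p : β → Prop}
    (hp : MeasurableSet {x | p x}) (h : ∀ᵐ a ∂m, ∀ᵐ x ∂f a, p x) : ∀ᵐ x ∂m.bind f, p x := by
  change m.bind f {x | p x}ᶜ = 0
  rw [Measure.bind_apply hp.compl hf]
  exact (lintegral_congr_ae (h.mono fun a ha => ae_iff.mp ha)).trans lintegral_zero

lemma ae_forall_pos_bind_pi {ι : Type*} [Fintype ι] {μ : Measure ℝ} (hμ : ∀ᵐ t ∂μ, 0 ≤ t)
    {κ : ι → ℝ → Measure ℝ} (hκ : ∀ i, Measurable (κ i))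
    (hκprob : ∀ i, ∀ t ≥ (0 : ℝ), IsProbabilityMeasure (κ i t))
    (hκpos : ∀ i, ∀ t ≥ (0 : ℝ), ∀ᵐ s ∂κ i t, 0 < s) :
    ∀ᵐ x ∂μ.bind (fun t => Measure.pi fun i => κ i t), ∀ i, 0 < x i := by
  refine Measure.ae_bind_of_ae_ae (aemeasurable_measure_pi_of_ae_nonneg hμ hκ hκprob)
    (measurableSet_setOfPred.2 (.forall fun i => Measurable.lt measurable_const
      (measurable_pi_apply i))) ?_
  filter_upwards [hμ] with t ht
  have := fun i => hκprob i t ht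
  exact ae_all_iff.2 fun i => Measure.tendsto_eval_ae_ae.eventually (hκpos i t ht)

lemma measure_forall_le_eq_lintegral_exp {Ω ι β : Type*} [MeasurableSpace Ω] [Fintype ι]
    [MeasurableSpace β] {P : Measure Ω} [IsProbabilityMeasure P]
    {X : Ω → β} (hX : Measurable X) {E : ι → Ω → ℝ} (hEm : ∀ i, Measurable (E i))
    (hE : ∀ i, ∀ t ≥ (0 : ℝ), P {ω | t < E i ω} = ENNReal.ofReal (exp (-t)))
    (hindep : iIndepFun E P) (hEX : IndepFun (fun ω i => E i ω) X P)
    {a : β → ι → ℝ} (ha : Measurable a) (ha0 : ∀ᵐ x ∂P.map X, ∀ i, 0 ≤ a x i) :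
    P {ω | ∀ i, a (X ω) i ≤ E i ω} = ∫⁻ x, ENNReal.ofReal (exp (-∑ i, a x i)) ∂P.map X := by
  set Y : Ω → ι → ℝ := fun ω i => E i ω
  have hY : Measurable Y := measurable_pi_lambda _ hEm
  have hS : MeasurableSet {q : β × (ι → ℝ) | ∀ i, a q.1 i ≤ q.2 i} :=
    measurableSet_setOfPred.2 (.forall fun i => Measurable.le' (by fun_prop) (by fun_prop))
  have hmap : P.map (fun ω => (X ω, Y ω)) = (P.map X).prod (P.map Y) :=
    (indepFun_iff_map_prod_eq_prod_map_map hX.aemeasurable hY.aemeasurable).mp hEX.symm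
  calc P {ω | ∀ i, a (X ω) i ≤ E i ω}
      = P.map (fun ω => (X ω, Y ω)) {q | ∀ i, a q.1 i ≤ q.2 i} := by
        rw [Measure.map_apply (hX.prodMk hY) hS]; rfl
    _ = ∫⁻ x, P.map Y {e | ∀ i, a x i ≤ e i} ∂P.map X := by
        rw [hmap, Measure.prod_apply hS]; rfl
    _ = _ := by
      refine lintegral_congr_ae ?_
      filter_upwards [ha0] with x hx
      rw [Measure.map_apply hY]
      · exact hindep.measure_forall_le_eq_ofReal_exp_neg_sum hE hx
      exact measurableSet_setOfPred.2 (.forall fun i => Measurable.le' (by fun_prop) (by fun_prop))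

lemma lintegral_exp_neg_sum_mul_bind_pi {ι : Type*} [Fintype ι] {μ : Measure ℝ}
    (hμ : ∀ᵐ t ∂μ, 0 ≤ t) {κ : ι → ℝ → Measure ℝ} (hκ : ∀ i, Measurable (κ i))
    (hκprob : ∀ i, ∀ t ≥ (0 : ℝ), IsProbabilityMeasure (κ i t))
    (hκpos : ∀ i, ∀ t ≥ (0 : ℝ), ∀ᵐ s ∂κ i t, 0 ≤ s)
    {y : ι → ℝ} (hy : ∀ i, 0 ≤ y i) {ψ : ι → ℝ}
    (hlaplace : ∀ i, ∀ t ≥ (0 : ℝ), ∫ s, exp (-(y i * s)) ∂κ i t = exp (-(t * ψ i))) :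
    ∫⁻ x, ENNReal.ofReal (exp (-∑ i, y i * x i)) ∂μ.bind (fun t => Measure.pi fun i => κ i t)
      = ∫⁻ t, ENNReal.ofReal (exp (-((∑ i, ψ i) * t))) ∂μ := by
  rw [Measure.lintegral_bind (aemeasurable_measure_pi_of_ae_nonneg hμ hκ hκprob)
    (Measurable.ennreal_ofReal (by fun_prop)).aemeasurable]
  refine lintegral_congr_ae ?_
  filter_upwards [hμ] with t ht
  have := fun i => hκprob i t ht
  calc ∫⁻ x, ENNReal.ofReal (exp (-∑ i, y i * x i)) ∂Measure.pi (fun i => κ i t)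
      = ∫⁻ x, ∏ i, ENNReal.ofReal (exp (-(y i * x i))) ∂Measure.pi (fun i => κ i t) := by
        simp_rw [ENNReal.ofReal_exp_neg_sum]
    _ = ∏ i, ∫⁻ s, ENNReal.ofReal (exp (-(y i * s))) ∂κ i t :=
        lintegral_pi_prod_eq_prod (f := fun i s => ENNReal.ofReal (exp (-(y i * s))))
          fun i => Measurable.ennreal_ofReal (by fun_prop)
    _ = ∏ i, ENNReal.ofReal (exp (-(t * ψ i))) := by
        refine Finset.prod_congr rfl fun i _ => ?_
        rw [← ofReal_integral_exp_neg_mul (hκpos i t ht) (hy i), hlaplace i t ht]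
    _ = ENNReal.ofReal (exp (-((∑ i, ψ i) * t))) := by
        rw [← ENNReal.ofReal_exp_neg_sum, ← Finset.mul_sum, mul_comm]

lemma StrictAntiOn.le_iff_mul_le {f : ℝ → ℝ} (hf : StrictAntiOn f (Ici 0)) {c e l : ℝ}
    (hc : 0 ≤ c) (he : 0 ≤ e) (hl : 0 < l) : f (e / l) ≤ f c ↔ c * l ≤ e := by
  rw [hf.le_iff_ge (div_nonneg he hl.le) hc, le_div_iff₀ hl]

theorem hierarchical_archimedean_sampling_general
    (μ₀ : Measure ℝ) [IsProbabilityMeasure μ₀]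
    (hsupp : μ₀ {t | t ≤ 0} = 0)
    (φ₀ : ℝ → ℝ)
    (hφ₀ : ∀ x, φ₀ x = ∫ t, Real.exp (-(x * t)) ∂μ₀)
    (J : ℕ) (d : Fin J → ℕ)
    (ψ : Fin J → ℝ → ℝ)
    (hψmono : ∀ j, StrictMonoOn (ψ j) (Ici 0))
    (hψnonneg : ∀ j, ∀ y ≥ (0 : ℝ), 0 ≤ ψ j y)
    (κ : Fin J → ℝ → Measure ℝ)
    (hκmeas : ∀ j, Measurable (κ j))
    (hκprob : ∀ j, ∀ t ≥ (0 : ℝ), IsProbabilityMeasure (κ j t))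
    (hκsupp : ∀ j, ∀ t ≥ (0 : ℝ), κ j t {s | s ≤ 0} = 0)
    (hκlt : ∀ j, ∀ t ≥ (0 : ℝ), ∀ y ≥ (0 : ℝ),
      ∫ s, Real.exp (-(y * s)) ∂(κ j t) = Real.exp (-(t * ψ j y)))
    (φinv : Fin J → ℝ → ℝ)
    (hinv : ∀ j, ∀ u ∈ Ioc (0 : ℝ) 1, 0 ≤ φinv j u ∧ φ₀ (ψ j (φinv j u)) = u)
    (hinv' : ∀ j, ∀ x ≥ (0 : ℝ), φinv j (φ₀ (ψ j x)) = x)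
    {Ω : Type*} [MeasurableSpace Ω] (P : Measure Ω) [IsProbabilityMeasure P]
    (Λ : Ω → (Fin J → ℝ)) (hΛmeas : Measurable Λ)
    (hΛ : P.map Λ = μ₀.bind (fun t => Measure.pi (fun j => κ j t)))
    (E : (j : Fin J) → Fin (d j) → Ω → ℝ)
    (hEmeas : ∀ j i, Measurable (E j i))
    (hE : ∀ j i, ∀ t ≥ (0 : ℝ), P {ω | t < E j i ω} = ENNReal.ofReal (Real.exp (-t)))
    (hEindep : ProbabilityTheory.iIndepFun
      (fun p : (Σ j : Fin J, Fin (d j)) => E p.1 p.2) P)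
    (hEΛindep : ProbabilityTheory.IndepFun
      (fun ω => fun p : (Σ j : Fin J, Fin (d j)) => E p.1 p.2 ω) Λ P) :
    ∀ u : (j : Fin J) → Fin (d j) → ℝ, (∀ j i, u j i ∈ Ioc (0 : ℝ) 1) →
      P {ω | ∀ j i, φ₀ (ψ j (E j i ω / Λ ω j)) ≤ u j i}
        = ENNReal.ofReal (φ₀ (∑ j, ψ j (∑ i, φinv j (u j i)))) := by
  intro u hu
  set c : (j : Fin J) → Fin (d j) → ℝ := fun j i => φinv j (u j i)
  have hc : ∀ j i, 0 ≤ c j i ∧ φ₀ (ψ j (c j i)) = u j i := fun j i => hinv j _ (hu j i)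
  have hs : ∀ j, 0 ≤ ∑ i, c j i := fun j => Finset.sum_nonneg fun i _ => (hc j i).1
  have hμ₀ : ∀ᵐ t ∂μ₀, 0 ≤ t := (ae_pos_of_measure_setOf_le_zero hsupp).mono fun _ => le_of_lt
  have hκpos : ∀ j, ∀ t ≥ (0 : ℝ), ∀ᵐ s ∂κ j t, 0 < s := fun j t ht =>
    ae_pos_of_measure_setOf_le_zero (hκsupp j t ht)
  have hφ : ∀ j, StrictAntiOn (fun x => φ₀ (ψ j x)) (Ici 0) := fun j => by
    have hφ₀anti : AntitoneOn φ₀ (Ici 0) := funext hφ₀ ▸ antitoneOn_integral_exp_neg_mul hμ₀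
    exact (hφ₀anti.comp_MonotoneOn (hψmono j).monotoneOn fun x hx => hψnonneg j x hx)
      |>.strictAntiOn_of_injOn (LeftInvOn.injOn fun x hx => hinv' j x hx)
  have hΛpos : ∀ᵐ x ∂P.map Λ, ∀ j, 0 < x j := hΛ ▸ ae_forall_pos_bind_pi hμ₀ hκmeas hκprob hκpos
  have hEpos : ∀ᵐ ω ∂P, ∀ j i, 0 < E j i ω := ae_all_iff.2 fun j => ae_all_iff.2 fun i =>
    ae_pos_of_measure_lt_eq_ofReal_exp_neg (hEmeas j i) (hE j i)
  calc P {ω | ∀ j i, φ₀ (ψ j (E j i ω / Λ ω j)) ≤ u j i}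
      = P {ω | ∀ p : Σ j, Fin (d j), c p.1 p.2 * Λ ω p.1 ≤ E p.1 p.2 ω} := by
        refine measure_congr (Filter.eventuallyEq_set.2 ?_)
        filter_upwards [ae_of_ae_map hΛmeas.aemeasurable hΛpos, hEpos] with ω hΛω hEω
        simp only [Sigma.forall]
        refine forall_congr' fun j => forall_congr' fun i => ?_
        rw [← (hc j i).2]
        exact (hφ j).le_iff_mul_le (hc j i).1 (hEω j i).le (hΛω j)
    _ = ∫⁻ x, ENNReal.ofReal (exp (-∑ p : Σ j, Fin (d j), c p.1 p.2 * x p.1)) ∂P.map Λ :=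
        measure_forall_le_eq_lintegral_exp hΛmeas (fun p => hEmeas p.1 p.2) (fun p => hE p.1 p.2)
          hEindep hEΛindep (a := fun x (p : Σ j, Fin (d j)) => c p.1 p.2 * x p.1) (by fun_prop)
          (hΛpos.mono fun x hx p => mul_nonneg (hc p.1 p.2).1 (hx p.1).le)
    _ = ∫⁻ x, ENNReal.ofReal (exp (-∑ j, (∑ i, c j i) * x j)) ∂P.map Λ := by
        simp_rw [Fintype.sum_sigma, Finset.sum_mul]
    _ = ∫⁻ t, ENNReal.ofReal (exp (-((∑ j, ψ j (∑ i, c j i)) * t))) ∂μ₀ := by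
        rw [hΛ]
        exact lintegral_exp_neg_sum_mul_bind_pi hμ₀ hκmeas hκprob
          (fun j t ht => (hκpos j t ht).mono fun _ => le_of_lt) hs
          fun j t ht => hκlt j t ht _ (hs j)
    _ = ENNReal.ofReal (φ₀ (∑ j, ψ j (∑ i, c j i))) := by
        rw [hφ₀, ofReal_integral_exp_neg_mul hμ₀
          (Finset.sum_nonneg fun j _ => hψnonneg j _ (hs j))]

/-- Correctness of the hierarchical Archimedean copula sampling algorithm
(Hering–Hofert–Mai–Scherer): with outer generator `φ₀` (Laplace transform of `μ₀` on
`(0,∞)`), Laplace exponents `ψⱼ` of subordinators with laws `κⱼ(t)`, inner generators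
`φⱼ = φ₀ ∘ ψⱼ` (bijections `[0,∞) → (0,1]` with inverses `φⱼ⁻¹`), subordinator values
`Λ = (Λ₁, …, Λ_J)` sampled at a common `μ₀`-distributed time, and i.i.d. `Exp(1)`
variables `E_{j,i}` independent of `Λ`, the vector `(φⱼ(E_{j,i}/Λⱼ))_{j,i}` has joint CDF
`φ₀(∑ⱼ ψⱼ(∑ᵢ φⱼ⁻¹(u_{j,i})))`, the two-level hierarchical Archimedean copula. -/
theorem hierarchical_archimedean_sampling
    (μ₀ : Measure ℝ) [IsProbabilityMeasure μ₀]
    (hsupp : μ₀ {t | t ≤ 0} = 0)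
    (φ₀ : ℝ → ℝ)
    (hφ₀ : ∀ x, φ₀ x = ∫ t, Real.exp (-(x * t)) ∂μ₀)
    (J : ℕ) (hJ : 1 ≤ J) (d : Fin J → ℕ)
    (ψ : Fin J → ℝ → ℝ)
    (hψcont : ∀ j, ContinuousOn (ψ j) (Ici 0))
    (hψmono : ∀ j, StrictMonoOn (ψ j) (Ici 0))
    (hψ0 : ∀ j, ψ j 0 = 0)
    (hψnonneg : ∀ j, ∀ y ≥ (0 : ℝ), 0 ≤ ψ j y)
    (hψtop : ∀ j, Filter.Tendsto (ψ j) Filter.atTop Filter.atTop)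
    (κ : Fin J → ℝ → Measure ℝ)
    (hκmeas : ∀ j, Measurable (κ j))
    (hκprob : ∀ j, ∀ t ≥ (0 : ℝ), IsProbabilityMeasure (κ j t))
    (hκsupp : ∀ j, ∀ t ≥ (0 : ℝ), κ j t {s | s ≤ 0} = 0)
    (hκlt : ∀ j, ∀ t ≥ (0 : ℝ), ∀ y ≥ (0 : ℝ),
      ∫ s, Real.exp (-(y * s)) ∂(κ j t) = Real.exp (-(t * ψ j y)))
    (φinv : Fin J → ℝ → ℝ)
    (hinv : ∀ j, ∀ u ∈ Ioc (0 : ℝ) 1, 0 ≤ φinv j u ∧ φ₀ (ψ j (φinv j u)) = u)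
    (hinv' : ∀ j, ∀ x ≥ (0 : ℝ), φinv j (φ₀ (ψ j x)) = x)
    {Ω : Type*} [MeasurableSpace Ω] (P : Measure Ω) [IsProbabilityMeasure P]
    (Λ : Ω → (Fin J → ℝ)) (hΛmeas : Measurable Λ)
    (hΛ : P.map Λ = μ₀.bind (fun t => Measure.pi (fun j => κ j t)))
    (E : (j : Fin J) → Fin (d j) → Ω → ℝ)
    (hEmeas : ∀ j i, Measurable (E j i))
    (hE : ∀ j i, ∀ t ≥ (0 : ℝ), P {ω | t < E j i ω} = ENNReal.ofReal (Real.exp (-t)))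
    (hEindep : ProbabilityTheory.iIndepFun
      (fun p : (Σ j : Fin J, Fin (d j)) => E p.1 p.2) P)
    (hEΛindep : ProbabilityTheory.IndepFun
      (fun ω => fun p : (Σ j : Fin J, Fin (d j)) => E p.1 p.2 ω) Λ P) :
    ∀ u : (j : Fin J) → Fin (d j) → ℝ, (∀ j i, u j i ∈ Ioc (0 : ℝ) 1) →
      P {ω | ∀ j i, φ₀ (ψ j (E j i ω / Λ ω j)) ≤ u j i}
        = ENNReal.ofReal (φ₀ (∑ j, ψ j (∑ i, φinv j (u j i)))) :=
  hierarchical_archimedean_sampling_general μ₀ hsupp φ₀ hφ₀ J d ψ hψmono hψnonneg κ hκmeas hκprob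
    hκsupp hκlt φinv hinv hinv' P Λ hΛmeas hΛ E hEmeas hE hEindep hEΛindep
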